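/- arXiv:2504.16624 — 2 statements merged into one kernel-verified Lean document; each statement's English description precedes it below -/
import Mathlib

section
/- Let Obs be an observation function with Ω ⊨ Obs, and let (σ, b) be a new observation constructed as an interleaving of a local query σ_i over Σ_i with a trace σ' whose projections on all Σ_j (j ≠ i) are positive under Obs, where proj(σ, Σ_i) is not in the domain of Obs_{Σ_i}. Then Ω ⊨ Obs ∪ {(σ, b)}. -/
open Classical in
/-- Projection of a trace onto a sub-alphabet. -/
noncomputable def proj {A : Type*} (s : Set A) : List A → List A
  | [] => []
  | a :: σ => if a ∈ s then a :: proj s σ else proj s σ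

/-- A distribution of the alphabet `A`: a family of sub-alphabets covering `A`. -/
def AlphabetDistribution {A : Type*} (Ω : Set (Set A)) : Prop := ⋃₀ Ω = Set.univ

/-- A language agrees with an observation function (`L ⊨ Obs`). -/
def Agrees {A : Type*} (L : Set (List A)) (Obs : List A → Option Bool) : Prop :=
  ∀ σ b, Obs σ = some b → (σ ∈ L ↔ b = true)

/-- `L` is a product language over the distribution `Ω`: it is the parallel
composition of a family of languages over the component alphabets. -/
def ProductLang {A : Type*} (Ω : Set (Set A)) (L : Set (List A)) : Prop :=
  ∃ Ls : Set A → Set (List A),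
    (∀ s ∈ Ω, ∀ σ ∈ Ls s, ∀ a ∈ σ, a ∈ s) ∧
    L = {σ | ∀ s ∈ Ω, proj s σ ∈ Ls s}

/-- `Ω ⊨ Obs`: some product language over `Ω` agrees with `Obs`. -/
def Models {A : Type*} (Ω : Set (Set A)) (Obs : List A → Option Bool) : Prop :=
  ∃ L, ProductLang Ω L ∧ Agrees L Obs

/-- A counter-example to `Ω ⊨ Obs`: a negative observation `σN` together with,
for each component alphabet, a positive observation with matching projection. -/
def IsCED {A : Type*} (Ω : Set (Set A)) (Obs : List A → Option Bool)
    (σN : List A) (P : Set A → List A) : Prop :=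
  Obs σN = some false ∧
  ∀ s ∈ Ω, Obs (P s) = some true ∧ proj s σN = proj s (P s)

/-- The connectivity preorder: `Ω` is less connecting than `Ω'`. -/
def lessConn {A : Type*} (Ω Ω' : Set (Set A)) : Prop :=
  ∀ s ∈ Ω, ∃ t ∈ Ω', s ⊆ t

/-! The query only touches the language of the component `Si`: add `proj Si σ` to it when
`b = true`, remove it otherwise. No earlier observation has that `Si`-projection, so their
membership is unchanged, while for `σ` itself every other component already accepts its
projection, because it is the projection of a positive observation. -/

theorem mem_of_mem_proj {A : Type*} {s : Set A} {a : A} :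
    ∀ {τ : List A}, a ∈ proj s τ → a ∈ s
  | [], h => by simp [proj] at h
  | x :: τ, h => by
    by_cases hx : x ∈ s
    · simp only [proj, hx, if_true, List.mem_cons] at h
      exact h.elim (· ▸ hx) mem_of_mem_proj
    · simp only [proj, hx, if_false] at h
      exact mem_of_mem_proj h

section Toggle

variable {α : Type*} (M : Set α) (w : α) (b : Bool)

def toggle : Set α := if b then insert w M else M \ {w}

variable {M w b}

theorem mem_toggle_of_ne {v : α} (h : v ≠ w) : v ∈ toggle M w b ↔ v ∈ M := by
  cases b <;> simp [toggle, h]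

theorem mem_toggle_self : w ∈ toggle M w b ↔ b = true := by
  cases b <;> simp [toggle]

theorem toggle_subset_insert : toggle M w b ⊆ insert w M := by
  cases b
  · exact Set.sdiff_subset.trans (Set.subset_insert w M)
  · exact subset_rfl

end Toggle

theorem Agrees.extend {A : Type*} [DecidableEq (List A)] {L L' : Set (List A)}
    {Obs : List A → Option Bool} {σ : List A} {b : Bool} (hAg : Agrees L Obs)
    (hσ : σ ∈ L' ↔ b = true) (hL : ∀ τ, Obs τ ≠ none → τ ≠ σ → (τ ∈ L' ↔ τ ∈ L)) :
    Agrees L' (fun τ => if τ = σ then some b else Obs τ) := by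
  intro τ b' hτ
  dsimp only at hτ
  by_cases hτσ : τ = σ
  · subst hτσ
    rw [if_pos rfl, Option.some_inj] at hτ
    exact hτ ▸ hσ
  · rw [if_neg hτσ] at hτ
    rw [hL τ (by simp [hτ]) hτσ]
    exact hAg τ b' hτ

section ComponentUpdate

open Classical

variable {A : Type*} {Ω : Set (Set A)} {Ls : Set A → Set (List A)} {Si : Set A} {w : List A}
  {b : Bool}

theorem mem_update_toggle_iff_of_proj_ne {τ : List A} (hτ : proj Si τ ≠ w) (s : Set A) :
    proj s τ ∈ Function.update Ls Si (toggle (Ls Si) w b) s ↔ proj s τ ∈ Ls s := by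
  by_cases hs : s = Si
  · subst hs
    rw [Function.update_self, mem_toggle_of_ne hτ]
  · rw [Function.update_of_ne hs]

theorem mem_prod_update_toggle_iff {σ : List A} (hSi : Si ∈ Ω)
    (hpos : ∀ s ∈ Ω, s ≠ Si → proj s σ ∈ Ls s) :
    (∀ s ∈ Ω, proj s σ ∈ Function.update Ls Si (toggle (Ls Si) (proj Si σ) b) s) ↔
      b = true := by
  refine ⟨fun h => ?_, fun hb s hs => ?_⟩
  · simpa only [Function.update_self, mem_toggle_self] using h Si hSi
  · by_cases hsi : s = Si
    · subst hsi
      rwa [Function.update_self, mem_toggle_self]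
    · rw [Function.update_of_ne hsi]
      exact hpos s hs hsi

theorem productLang_update_toggle (hLs : ∀ s ∈ Ω, ∀ v ∈ Ls s, ∀ a ∈ v, a ∈ s)
    (hw : ∀ a ∈ w, a ∈ Si) :
    ProductLang Ω {τ | ∀ s ∈ Ω, proj s τ ∈ Function.update Ls Si (toggle (Ls Si) w b) s} := by
  refine ⟨_, fun s hs v hv a ha => ?_, rfl⟩
  by_cases hsi : s = Si
  · subst hsi
    rw [Function.update_self] at hv
    rcases toggle_subset_insert hv with rfl | hv
    · exact hw a ha
    · exact hLs s hs v hv a ha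
  · rw [Function.update_of_ne hsi] at hv
    exact hLs s hs v hv a ha

end ComponentUpdate

open Classical in
theorem membership_preserves_models_general {A : Type*} (Ω : Set (Set A))
    (Obs : List A → Option Bool)
    (hmod : Models Ω Obs)
    (Si : Set A) (hSi : Si ∈ Ω) (σ : List A) (b : Bool)
    (hpos : ∀ s ∈ Ω, s ≠ Si → ∃ τ, Obs τ = some true ∧ proj s τ = proj s σ)
    (hloc : ¬ ∃ τ, Obs τ ≠ none ∧ proj Si τ = proj Si σ) :
    Models Ω (fun τ => if τ = σ then some b else Obs τ) := by
  obtain ⟨_, ⟨Ls, hLs, rfl⟩, hAg⟩ := hmod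
  have hσpos : ∀ s ∈ Ω, s ≠ Si → proj s σ ∈ Ls s := by
    intro s hs hsi
    obtain ⟨τ, hτ, hproj⟩ := hpos s hs hsi
    exact hproj ▸ (hAg τ true hτ).2 rfl s hs
  refine ⟨_, productLang_update_toggle hLs fun _ => mem_of_mem_proj, hAg.extend
    (mem_prod_update_toggle_iff hSi hσpos) fun τ hτ _ => ?_⟩
  have hne : proj Si τ ≠ proj Si σ := fun h => hloc ⟨τ, hτ, h⟩
  simp only [Set.mem_ofPred_eq, mem_update_toggle_iff_of_proj_ne hne]

open Classical in
/-- A membership query constructed by the Adapter cannot invalidate the current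
distribution: if `Ω ⊨ Obs`, the query trace `σ` is new, its projections on all
components other than `Si` are already known positive, and its projection on `Si`
is not in the domain of the local observations, then `Ω` still models the extended
observation function, whatever the answer `b`. -/
theorem membership_preserves_models {A : Type*} (Ω : Set (Set A))
    (hΩ : AlphabetDistribution Ω) (Obs : List A → Option Bool)
    (hfin : {τ | Obs τ ≠ none}.Finite) (hmod : Models Ω Obs)
    (Si : Set A) (hSi : Si ∈ Ω) (σ : List A) (b : Bool)
    (hnew : Obs σ = none)
    (hpos : ∀ s ∈ Ω, s ≠ Si → ∃ τ, Obs τ = some true ∧ proj s τ = proj s σ)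
    (hloc : ¬ ∃ τ, Obs τ ≠ none ∧ proj Si τ = proj Si σ) :
    Models Ω (fun τ => if τ = σ then some b else Obs τ) :=
  membership_preserves_models_general Ω Obs hmod Si hSi σ b hpos hloc
end

section
/- If CED(Ω, Obs) ≠ ∅ and for each counter-example ce in a chosen nonempty subset S a discrepancy δ_ce is selected, then the distribution Ω' = Ω ∪ {δ_ce | ce ∈ S} satisfies Ω ≼ Ω' strictly (Ω' ⋠ Ω), and no counter-example of S remains in CED(Ω', Obs). -/
/-- A distribution of the alphabet `A`: a family of sub-alphabets covering `A`. -/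
def TraceDistribution {A : Type*} (Ω : Set (Set A)) : Prop := ⋃₀ Ω = Set.univ

/-- Multiplicity discrepancies: symbols occurring a different number of times. -/
def MultDisc {A : Type*} [DecidableEq A] (x y : List A) : Set A :=
  {a | x.count a ≠ y.count a}

/-- Order discrepancy: a pair of distinct symbols, each with equal multiplicity in
both traces, whose relative order differs between the two traces. -/
def OrdDisc {A : Type*} [DecidableEq A] (x y : List A) (a b : A) : Prop :=
  a ≠ b ∧ x.count a = y.count a ∧ x.count b = y.count b ∧
    proj {a, b} x ≠ proj {a, b} y

/-- `δ` is a discrepancy for the counter-example `(σN, P)`: for every component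
alphabet it contains a multiplicity discrepancy or an order-discrepancy pair. -/
def IsDisc {A : Type*} [DecidableEq A] (Ω : Set (Set A)) (σN : List A)
    (P : Set A → List A) (δ : Set A) : Prop :=
  ∀ s ∈ Ω, (∃ a ∈ δ, a ∈ MultDisc σN (P s)) ∨
    (∃ a b, a ∈ δ ∧ b ∈ δ ∧ OrdDisc σN (P s) a b)

/-! Projecting onto `δ` keeps the multiplicity of every letter of `δ` and factors through
the projection onto any superset of `δ`. Hence a discrepancy `δ` already separates `σN`
from each `P Σᵢ` after projection onto `δ`, while a counter-example agrees with `P Σᵢ`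
on `Σᵢ`, so `δ` lies in no `Σᵢ`: the added alphabet is new to `Ω`. -/

theorem count_proj_of_mem {A : Type*} [DecidableEq A] {s : Set A} {a : A} (ha : a ∈ s) :
    ∀ x : List A, (proj s x).count a = x.count a
  | [] => rfl
  | b :: σ => by
    by_cases hb : b ∈ s
    · simp [proj, hb, List.count_cons, count_proj_of_mem ha σ]
    · have hba : b ≠ a := fun h => hb (h ▸ ha)
      simp [proj, hb, count_proj_of_mem ha σ, hba]

theorem proj_proj_of_subset {A : Type*} {s t : Set A} (h : s ⊆ t) :
    ∀ x : List A, proj s (proj t x) = proj s x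
  | [] => rfl
  | b :: σ => by
    by_cases hb : b ∈ t
    · by_cases hbs : b ∈ s <;> simp [proj, hb, hbs, proj_proj_of_subset h σ]
    · have hbs : b ∉ s := fun hbs => hb (h hbs)
      simp [proj, hb, hbs, proj_proj_of_subset h σ]

theorem proj_eq_proj_of_subset {A : Type*} {s t : Set A} (h : s ⊆ t) {x y : List A}
    (hxy : proj t x = proj t y) : proj s x = proj s y := by
  rw [← proj_proj_of_subset h x, hxy, proj_proj_of_subset h y]

theorem count_eq_of_proj_eq {A : Type*} [DecidableEq A] {s : Set A} {a : A} (ha : a ∈ s)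
    {x y : List A} (hxy : proj s x = proj s y) : x.count a = y.count a := by
  rw [← count_proj_of_mem ha x, hxy, count_proj_of_mem ha y]

theorem IsDisc.proj_ne {A : Type*} [DecidableEq A] {Ω : Set (Set A)} {σN : List A}
    {P : Set A → List A} {δ : Set A} (hδ : IsDisc Ω σN P δ) {s : Set A} (hs : s ∈ Ω) :
    proj δ σN ≠ proj δ (P s) := by
  intro heq
  rcases hδ s hs with ⟨a, haδ, hmult⟩ | ⟨a, b, haδ, hbδ, -, -, -, hord⟩
  · exact hmult (count_eq_of_proj_eq haδ heq)
  · exact hord (proj_eq_proj_of_subset (Set.pair_subset haδ hbδ) heq)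

theorem IsCED.not_subset_of_isDisc {A : Type*} [DecidableEq A] {Ω : Set (Set A)}
    {Obs : List A → Option Bool} {σN : List A} {P : Set A → List A} (hce : IsCED Ω Obs σN P)
    {δ : Set A} (hδ : IsDisc Ω σN P δ) {t : Set A} (ht : t ∈ Ω) : ¬ δ ⊆ t := fun hsub =>
  hδ.proj_ne ht (proj_eq_proj_of_subset hsub ((hce.2 t ht).2))

theorem lessConn_union_right {A : Type*} (Ω Ω' : Set (Set A)) : lessConn Ω (Ω ∪ Ω') :=
  fun s hs => ⟨s, Or.inl hs, subset_rfl⟩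

theorem not_lessConn_union_of_not_subset {A : Type*} {Ω Ω' : Set (Set A)} {δ : Set A}
    (hδ : δ ∈ Ω') (hnot : ∀ t ∈ Ω, ¬ δ ⊆ t) : ¬ lessConn (Ω ∪ Ω') Ω :=
  fun hlc =>
  let ⟨t, ht, hsub⟩ := hlc δ (Or.inr hδ)
  hnot t ht hsub

theorem augment_with_discrepancies_general {A : Type*} [DecidableEq A]
    (Ω : Set (Set A)) (Obs : List A → Option Bool)
    (S : Set (List A × (Set A → List A)))
    (hS : ∀ ce ∈ S, IsCED Ω Obs ce.1 ce.2) (hSne : S.Nonempty)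
    (δ : List A × (Set A → List A) → Set A)
    (hδ : ∀ ce ∈ S, IsDisc Ω ce.1 ce.2 (δ ce)) :
    lessConn Ω (Ω ∪ δ '' S) ∧ ¬ lessConn (Ω ∪ δ '' S) Ω ∧
      ∀ ce ∈ S, ∀ s ∈ Ω, proj (δ ce) ce.1 ≠ proj (δ ce) (ce.2 s) := by
  obtain ⟨ce, hce⟩ := hSne
  refine ⟨lessConn_union_right Ω _, ?_, fun ce hce s hs => (hδ ce hce).proj_ne hs⟩
  exact not_lessConn_union_of_not_subset (Set.mem_image_of_mem δ hce)
    fun t ht => (hS ce hce).not_subset_of_isDisc (hδ ce hce) ht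

/-- Augmenting the distribution with one chosen discrepancy per counter-example in
a nonempty set `S ⊆ CED(Ω,Obs)` yields a strictly more connecting distribution in
which no counter-example of `S` remains: no trace of a counter-example's positive
image matches the negative trace on the added discrepancy. -/
theorem augment_with_discrepancies {A : Type*} [DecidableEq A]
    (Ω : Set (Set A)) (hΩ : TraceDistribution Ω) (Obs : List A → Option Bool)
    (S : Set (List A × (Set A → List A)))
    (hS : ∀ ce ∈ S, IsCED Ω Obs ce.1 ce.2) (hSne : S.Nonempty)
    (δ : List A × (Set A → List A) → Set A)
    (hδ : ∀ ce ∈ S, IsDisc Ω ce.1 ce.2 (δ ce)) :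
    lessConn Ω (Ω ∪ δ '' S) ∧ ¬ lessConn (Ω ∪ δ '' S) Ω ∧
      ∀ ce ∈ S, ∀ s ∈ Ω, proj (δ ce) ce.1 ≠ proj (δ ce) (ce.2 s) :=
  augment_with_discrepancies_general Ω Obs S hS hSne δ hδ
end
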